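/- For the Ising partition function Z_n on the Sierpinski gasket of stage n, defined by Z_n = 2U_n + 6V_n with the standard recursion, the function y^{3^n} Z_n(y) / 2 is a monic polynomial in y^4 of degree 3^n (as a polynomial in x = y^4). -/

import Mathlib

noncomputable def UV : ℕ → ((ℂ → ℂ) × (ℂ → ℂ))
  | 0 => (fun y => y ^ 3, fun y => y⁻¹)
  | n + 1 =>
    (fun y => (UV n).1 y ^ 3 + 3 * (UV n).1 y * (UV n).2 y ^ 2 + 4 * (UV n).2 y ^ 3,
     fun y => (UV n).1 y ^ 2 * (UV n).2 y + 4 * (UV n).1 y * (UV n).2 y ^ 2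
       + 3 * (UV n).2 y ^ 3)

noncomputable def Z (n : ℕ) (y : ℂ) : ℂ := 2 * (UV n).1 y + 6 * (UV n).2 y

/-! The recursion is a pair of homogeneous cubic forms, so rescaling by `y ^ 3 ^ n` commutes
with it: `y ^ 3 ^ n • (Uₙ, Vₙ)` is the `n`-th iterate of the same forms started at
`y • (U₀, V₀) = (y ^ 4, 1)`, i.e. `(Aₙ(y ^ 4), Bₙ(y ^ 4))` where `(Aₙ, Bₙ)` is the iterate
started at `(X, 1)` over `ℤ[X]`. Since `deg Aₙ = deg Bₙ + 1`, the terms `A ^ 3` and `A ^ 2 * B`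
dominate the two forms, so `Aₙ`, `Bₙ` stay monic with `deg Aₙ = 3 ^ n`, and
`y ^ 3 ^ n * Zₙ(y) / 2 = (Aₙ + 3 Bₙ)(y ^ 4)`. -/

open Polynomial

section IsingStep

variable {R : Type*} [CommSemiring R]

def isingStep (p : R × R) : R × R :=
  (p.1 ^ 3 + 3 * p.1 * p.2 ^ 2 + 4 * p.2 ^ 3,
   p.1 ^ 2 * p.2 + 4 * p.1 * p.2 ^ 2 + 3 * p.2 ^ 3)

theorem isingStep_smul (c : R) (p : R × R) : isingStep (c • p) = c ^ 3 • isingStep p := by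
  ext <;> simp only [isingStep, Prod.smul_fst, Prod.smul_snd, smul_eq_mul] <;> ring

theorem isingStep_map {S F : Type*} [CommSemiring S] [FunLike F R S] [RingHomClass F R S]
    (f : F) (p : R × R) : isingStep (Prod.map f f p) = Prod.map f f (isingStep p) := by
  ext <;> simp [isingStep, map_ofNat]

theorem isingStep_fst_monic {A B : R[X]} (hA : A.Monic) (hd : A.natDegree = B.natDegree + 1) :
    (isingStep (A, B)).1.Monic ∧ (isingStep (A, B)).1.natDegree = 3 * A.natDegree := by
  have hlt : (3 * A * B ^ 2 + 4 * B ^ 3).natDegree < (A ^ 3).natDegree := by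
    have : (3 * A * B ^ 2 + 4 * B ^ 3).natDegree
        ≤ max (A.natDegree + 2 * B.natDegree) (3 * B.natDegree) := by compute_degree
    rw [hA.natDegree_pow]
    omega
  have hsplit : (isingStep (A, B)).1 = A ^ 3 + (3 * A * B ^ 2 + 4 * B ^ 3) := by
    simp only [isingStep]; ring
  rw [hsplit, natDegree_add_eq_left_of_natDegree_lt hlt, hA.natDegree_pow]
  exact ⟨(hA.pow 3).add_of_left (degree_lt_degree hlt), rfl⟩

theorem isingStep_snd_monic {A B : R[X]} (hA : A.Monic) (hB : B.Monic)
    (hd : A.natDegree = B.natDegree + 1) :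
    (isingStep (A, B)).2.Monic ∧ (isingStep (A, B)).2.natDegree + 1 = 3 * A.natDegree := by
  have hlead : (A ^ 2 * B).natDegree = 2 * A.natDegree + B.natDegree := by
    rw [(hA.pow 2).natDegree_mul hB, hA.natDegree_pow]
  have hlt : (4 * A * B ^ 2 + 3 * B ^ 3).natDegree < (A ^ 2 * B).natDegree := by
    have : (4 * A * B ^ 2 + 3 * B ^ 3).natDegree
        ≤ max (A.natDegree + 2 * B.natDegree) (3 * B.natDegree) := by compute_degree
    omega
  have hsplit : (isingStep (A, B)).2 = A ^ 2 * B + (4 * A * B ^ 2 + 3 * B ^ 3) := by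
    simp only [isingStep]; ring
  rw [hsplit, natDegree_add_eq_left_of_natDegree_lt hlt, hlead]
  exact ⟨((hA.pow 2).mul hB).add_of_left (degree_lt_degree hlt), by omega⟩

end IsingStep

theorem UV_succ_apply (n : ℕ) (y : ℂ) :
    ((UV (n + 1)).1 y, (UV (n + 1)).2 y) = isingStep ((UV n).1 y, (UV n).2 y) :=
  rfl

noncomputable def isingPoly (n : ℕ) : ℤ[X] × ℤ[X] := isingStep^[n] (X, 1)

theorem isingPoly_succ (n : ℕ) : isingPoly (n + 1) = isingStep (isingPoly n) :=
  Function.iterate_succ_apply' _ _ _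

theorem isingPoly_monic (n : ℕ) :
    (isingPoly n).1.Monic ∧ (isingPoly n).2.Monic ∧
      (isingPoly n).1.natDegree = 3 ^ n ∧
      (isingPoly n).1.natDegree = (isingPoly n).2.natDegree + 1 := by
  induction n with
  | zero => simp [isingPoly]
  | succ n ih =>
    rw [isingPoly_succ]
    obtain ⟨hA, hB, hdA, hd⟩ := ih
    generalize isingPoly n = p at *
    obtain ⟨A, B⟩ := p
    dsimp only at hA hB hdA hd
    obtain ⟨hA', hdA'⟩ := isingStep_fst_monic hA hd
    obtain ⟨hB', hdB'⟩ := isingStep_snd_monic hA hB hd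
    exact ⟨hA', hB', by rw [hdA', hdA, pow_succ, mul_comm], by omega⟩

theorem smul_UV_eq_aeval_isingPoly (n : ℕ) {y : ℂ} (hy : y ≠ 0) :
    y ^ 3 ^ n • ((UV n).1 y, (UV n).2 y) =
      Prod.map (aeval (y ^ 4)) (aeval (y ^ 4)) (isingPoly n) := by
  induction n with
  | zero => simp [isingPoly, UV, hy]; ring
  | succ n ih =>
    rw [UV_succ_apply, pow_succ, pow_mul, ← isingStep_smul, ih, isingStep_map, isingPoly_succ]

theorem stmt3 (n : ℕ) :
    ∃ P : Polynomial ℤ, P.Monic ∧ P.natDegree = 3 ^ n ∧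
      ∀ y : ℂ, y ≠ 0 → y ^ (3 ^ n) * Z n y / 2 = Polynomial.aeval (y ^ 4) P := by
  obtain ⟨hA, -, hdA, hd⟩ := isingPoly_monic n
  have hlt : (3 * (isingPoly n).2).natDegree < (isingPoly n).1.natDegree := by
    have : (3 * (isingPoly n).2).natDegree ≤ (isingPoly n).2.natDegree := by compute_degree
    omega
  refine ⟨(isingPoly n).1 + 3 * (isingPoly n).2, hA.add_of_left (degree_lt_degree hlt),
    by rw [natDegree_add_eq_left_of_natDegree_lt hlt, hdA], fun y hy => ?_⟩
  have hUV := smul_UV_eq_aeval_isingPoly n hy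
  simp only [Prod.smul_mk, smul_eq_mul, Prod.map, Prod.mk.injEq] at hUV
  rw [map_add, map_mul, map_ofNat, ← hUV.1, ← hUV.2, Z]
  ring
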